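/- On the Heisenberg group ℍ^n, for any ν = (ν_x, ν_y, ν_t) ∈ ℝ^{2n+1} and f(ξ) = ⟨ξ, ν⟩, the horizontal gradient ∇_H f = (X_1 f, …, X_n f, Y_1 f, …, Y_n f) and the horizontal gradient of its norm satisfy ⟨∇_H f(ξ), ∇_H |∇_H f|(ξ)⟩ = 0 at every point where |∇_H f(ξ)| ≠ 0. -/

import Mathlib

/-!
For the linear function `f ζ = ⟨ζ, ν⟩` the horizontal derivatives are affine,
`X_i f = ν_{x,i} + 2 ν_t y_i` and `Y_i f = ν_{y,i} - 2 ν_t x_i`, so the only nonzero second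
horizontal derivatives are `Y_i X_i f = 2 ν_t = -X_i Y_i f`. Differentiating
`|∇_H f| = √(∑ (X_i f)² + (Y_i f)²)` where it does not vanish gives
`X_j |∇_H f| = -2 ν_t Y_j f / |∇_H f|` and `Y_j |∇_H f| = 2 ν_t X_j f / |∇_H f|`:
in each plane `(x_j, y_j)`, `∇_H |∇_H f|` is `∇_H f` turned by a right angle.
-/
open MeasureTheory Real

noncomputable section

abbrev H (n : ℕ) := (Fin n → ℝ) × (Fin n → ℝ) × ℝ

/-- Coefficient vector of the left-invariant field `X_i` at `ξ`. -/
def Xv (n : ℕ) (i : Fin n) (ξ : H n) : H n := (Pi.single i 1, 0, 2 * ξ.2.1 i)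

/-- Coefficient vector of the left-invariant field `Y_i` at `ξ`. -/
def Yv (n : ℕ) (i : Fin n) (ξ : H n) : H n := (0, Pi.single i 1, -(2 * ξ.1 i))

/-- The derivative `X_i f`. -/
def XD (n : ℕ) (i : Fin n) (f : H n → ℝ) (ξ : H n) : ℝ := fderiv ℝ f ξ (Xv n i ξ)

/-- The derivative `Y_i f`. -/
def YD (n : ℕ) (i : Fin n) (f : H n → ℝ) (ξ : H n) : ℝ := fderiv ℝ f ξ (Yv n i ξ)

/-- Euclidean norm of the horizontal gradient. -/
def hNorm (n : ℕ) (f : H n → ℝ) (ξ : H n) : ℝ :=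
  Real.sqrt (∑ i, ((XD n i f ξ) ^ 2 + (YD n i f ξ) ^ 2))

/-- Euclidean inner product on `ℝ^{2n+1}`. -/
def iprod (n : ℕ) (a b : H n) : ℝ :=
  (∑ i, a.1 i * b.1 i) + (∑ i, a.2.1 i * b.2.1 i) + a.2.2 * b.2.2

lemma fderiv_hNorm {n : ℕ} {f : H n → ℝ} {ξ : H n}
    (hX : ∀ i, DifferentiableAt ℝ (XD n i f) ξ) (hY : ∀ i, DifferentiableAt ℝ (YD n i f) ξ)
    (h : hNorm n f ξ ≠ 0) (v : H n) :
    fderiv ℝ (hNorm n f) ξ v =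
      (∑ i, (XD n i f ξ * fderiv ℝ (XD n i f) ξ v + YD n i f ξ * fderiv ℝ (YD n i f) ξ v))
        / hNorm n f ξ := by
  have hS := HasFDerivAt.fun_sum (u := Finset.univ) fun i _ =>
    ((hX i).hasFDerivAt.pow 2).fun_add ((hY i).hasFDerivAt.pow 2)
  have hS0 : ∑ i, (XD n i f ξ ^ 2 + YD n i f ξ ^ 2) ≠ 0 := fun h0 => h (by simp [hNorm, h0])
  have hN : HasFDerivAt (hNorm n f) _ ξ := hS.sqrt hS0
  rw [hN.fderiv, ← hNorm, Finset.sum_div]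
  simp only [smul_apply, sum_apply, add_apply, smul_eq_mul, nsmul_eq_mul, Finset.mul_sum]
  exact Finset.sum_congr rfl fun i _ => by ring

def iprodLeft (n : ℕ) (ν : H n) : H n →L[ℝ] ℝ :=
  LinearMap.toContinuousLinearMap
    { toFun := fun ζ => iprod n ζ ν
      map_add' := fun x y => by
        simp only [iprod, Prod.fst_add, Prod.snd_add, Pi.add_apply, add_mul,
          Finset.sum_add_distrib]
        ring
      map_smul' := fun r x => by
        simp only [iprod, Prod.smul_fst, Prod.smul_snd, Pi.smul_apply, smul_eq_mul,
          RingHom.id_apply, mul_add, Finset.mul_sum, mul_assoc] }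

@[simp]
lemma iprodLeft_apply (n : ℕ) (ν ζ : H n) : iprodLeft n ν ζ = iprod n ζ ν := rfl

lemma XD_iprod (n : ℕ) (i : Fin n) (ν : H n) :
    XD n i (fun ζ => iprod n ζ ν) = fun ξ => ν.1 i + 2 * ν.2.2 * ξ.2.1 i := by
  ext ξ
  rw [XD, show (fun ζ => iprod n ζ ν) = iprodLeft n ν from rfl, ContinuousLinearMap.fderiv]
  simp only [iprodLeft_apply, iprod, Xv, Pi.single_apply, ite_mul, one_mul, zero_mul,
    Finset.sum_ite_eq', Finset.mem_univ, ↓reduceIte, Pi.zero_apply, Finset.sum_const_zero]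
  ring

lemma YD_iprod (n : ℕ) (i : Fin n) (ν : H n) :
    YD n i (fun ζ => iprod n ζ ν) = fun ξ => ν.2.1 i - 2 * ν.2.2 * ξ.1 i := by
  ext ξ
  rw [YD, show (fun ζ => iprod n ζ ν) = iprodLeft n ν from rfl, ContinuousLinearMap.fderiv]
  simp only [iprodLeft_apply, iprod, Yv, Pi.single_apply, ite_mul, one_mul, zero_mul,
    Finset.sum_ite_eq', Finset.mem_univ, ↓reduceIte, Pi.zero_apply, Finset.sum_const_zero]
  ring

lemma fderiv_XD_iprod (n : ℕ) (i : Fin n) (ν ξ v : H n) :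
    fderiv ℝ (XD n i (fun ζ => iprod n ζ ν)) ξ v = 2 * ν.2.2 * v.2.1 i := by
  let yᵢ : H n →L[ℝ] ℝ := (ContinuousLinearMap.proj i).comp
    ((ContinuousLinearMap.fst ℝ _ _).comp (ContinuousLinearMap.snd ℝ _ _))
  have h : HasFDerivAt (XD n i (fun ζ => iprod n ζ ν)) ((2 * ν.2.2) • yᵢ) ξ := by
    rw [XD_iprod]
    exact (yᵢ.hasFDerivAt.const_mul _).const_add _
  rw [h.fderiv]
  rfl

lemma fderiv_YD_iprod (n : ℕ) (i : Fin n) (ν ξ v : H n) :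
    fderiv ℝ (YD n i (fun ζ => iprod n ζ ν)) ξ v = -(2 * ν.2.2 * v.1 i) := by
  let xᵢ : H n →L[ℝ] ℝ := (ContinuousLinearMap.proj i).comp (ContinuousLinearMap.fst ℝ _ _)
  have h : HasFDerivAt (YD n i (fun ζ => iprod n ζ ν)) (-((2 * ν.2.2) • xᵢ)) ξ := by
    rw [YD_iprod]
    exact (xᵢ.hasFDerivAt.const_mul _).const_sub _
  rw [h.fderiv]
  rfl

lemma fderiv_hNorm_iprod {n : ℕ} {ν ξ : H n} (h : hNorm n (fun ζ => iprod n ζ ν) ξ ≠ 0)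
    (v : H n) :
    fderiv ℝ (hNorm n (fun ζ => iprod n ζ ν)) ξ v
      = 2 * ν.2.2 * (∑ i, (XD n i (fun ζ => iprod n ζ ν) ξ * v.2.1 i
          - YD n i (fun ζ => iprod n ζ ν) ξ * v.1 i)) / hNorm n (fun ζ => iprod n ζ ν) ξ := by
  rw [fderiv_hNorm (fun i => by rw [XD_iprod]; fun_prop) (fun i => by rw [YD_iprod]; fun_prop) h]
  simp only [fderiv_XD_iprod, fderiv_YD_iprod, Finset.mul_sum]
  exact congrArg (· / _) (Finset.sum_congr rfl fun i _ => by ring)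

lemma XD_hNorm_iprod {n : ℕ} {ν ξ : H n} (h : hNorm n (fun ζ => iprod n ζ ν) ξ ≠ 0)
    (j : Fin n) :
    XD n j (hNorm n (fun ζ => iprod n ζ ν)) ξ
      = -(2 * ν.2.2 * YD n j (fun ζ => iprod n ζ ν) ξ) / hNorm n (fun ζ => iprod n ζ ν) ξ := by
  simp [XD, fderiv_hNorm_iprod h, Xv, Pi.single_apply]

lemma YD_hNorm_iprod {n : ℕ} {ν ξ : H n} (h : hNorm n (fun ζ => iprod n ζ ν) ξ ≠ 0)
    (j : Fin n) :
    YD n j (hNorm n (fun ζ => iprod n ζ ν)) ξ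
      = 2 * ν.2.2 * XD n j (fun ζ => iprod n ζ ν) ξ / hNorm n (fun ζ => iprod n ζ ν) ξ := by
  simp [YD, fderiv_hNorm_iprod h, Yv, Pi.single_apply]

theorem hGrad_orthogonal_to_hGrad_of_norm (n : ℕ) (ν : H n) (ξ : H n)
    (hW : hNorm n (fun ζ => iprod n ζ ν) ξ ≠ 0) :
    ∑ i, (XD n i (fun ζ => iprod n ζ ν) ξ
            * XD n i (hNorm n (fun ζ => iprod n ζ ν)) ξ
          + YD n i (fun ζ => iprod n ζ ν) ξ
            * YD n i (hNorm n (fun ζ => iprod n ζ ν)) ξ) = 0 := by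
  refine Finset.sum_eq_zero fun i _ => ?_
  rw [XD_hNorm_iprod hW, YD_hNorm_iprod hW]
  ring
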